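/- Let H : ℝ → ℝ be continuous and coercive, and let A₁ and A₂ be two set limiters for H. If the associated limited flux functions coincide, F_{A₁} = F_{A₂} as functions on ℝ, then A₁ = A₂. -/

import Mathlib

open Set Filter Topology

/-- `p⁻ = sup {q < p : H(q) ≥ H(p)}`. -/
noncomputable def pminus (H : ℝ → ℝ) (p : ℝ) : ℝ :=
  sSup {q : ℝ | q < p ∧ H p ≤ H q}

/-- `p⁺ = inf {q > p : H(q) ≤ H(p)}`, with `inf ∅ = +∞` (extended reals). -/
noncomputable def pplus (H : ℝ → ℝ) (p : ℝ) : EReal :=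
  sInf (Real.toEReal '' {q : ℝ | p < q ∧ H q ≤ H p})

/-- `H(p) → +∞` as `|p| → +∞`. -/
def Coercive (H : ℝ → ℝ) : Prop :=
  Tendsto H atTop atTop ∧ Tendsto H atBot atTop

/-- `F(p) → +∞` as `p → -∞`. -/
def SemiCoercive (F : ℝ → ℝ) : Prop := Tendsto F atBot atTop

/-- the open interval `(a⁻, a⁺)` (upper endpoint possibly `+∞`). -/
def ooMM (H : ℝ → ℝ) (a : ℝ) : Set ℝ :=
  {r : ℝ | pminus H a < r ∧ (r : EReal) < pplus H a}

/-- the open interval `(p, p⁺)` (upper endpoint possibly `+∞`). -/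
def ooUp (H : ℝ → ℝ) (p : ℝ) : Set ℝ :=
  {r : ℝ | p < r ∧ (r : EReal) < pplus H p}

/-- the closed interval `[a⁻, a⁺]` (upper endpoint possibly `+∞`). -/
def ccMM (H : ℝ → ℝ) (a : ℝ) : Set ℝ :=
  {r : ℝ | pminus H a ≤ r ∧ (r : EReal) ≤ pplus H a}

/-- `A` is a set limiter for `H`. -/
def IsSetLimiter (H : ℝ → ℝ) (A : Set ℝ) : Prop :=
  (∀ a ∈ A, (pminus H a : EReal) ≠ pplus H a) ∧
  (∀ a ∈ A, ∀ b ∈ A, a < b → H b ≤ H a) ∧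
  (∀ p : ℝ, pminus H p < p → ∃ a ∈ A, (Ioo (pminus H p) p ∩ ooMM H a).Nonempty) ∧
  (∀ p : ℝ, (p : EReal) < pplus H p → ∃ a ∈ A, (ooUp H p ∩ ooMM H a).Nonempty)

open Classical in
/-- The `A`-limited flux function `F_A`: equal to `H(a)` on `[a⁻, a⁺]` for `a ∈ A`,
and to `H` elsewhere. -/
noncomputable def limFlux (H : ℝ → ℝ) (A : Set ℝ) (p : ℝ) : ℝ :=
  if h : ∃ a, a ∈ A ∧ p ∈ ccMM H a then H h.choose else H p

/-- Condition (S) in the definition of `A_F`. -/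
def CondS (H F : ℝ → ℝ) (p : ℝ) : Prop :=
  pminus H p ≠ p ∧ H p ≤ F p ∧
    ∀ q : ℝ, H q ≤ F q → (ooMM H q ∩ Ioo (pminus H p) p).Nonempty → H q ≤ H p

/-- Condition (T) in the definition of `A_F`. -/
def CondT (H F : ℝ → ℝ) (p : ℝ) : Prop :=
  (p : EReal) ≠ pplus H p ∧ F p ≤ H p ∧
    ∀ q : ℝ, F q ≤ H q → (ooMM H q ∩ ooUp H p).Nonempty → H p ≤ H q

/-- The set `A_F` associated with a boundary function `F`. -/
def limiterOf (H F : ℝ → ℝ) : Set ℝ := {p : ℝ | CondS H F p ∨ CondT H F p}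

/-!
Inside `(a⁻, a⁺)` the function `H` is below `H a` to the left of `a` and above it to the right,
and by continuity the same holds weakly on `[a⁻, a⁺]`. Hence if `a, b` belong to one set limiter
and `x ∈ (a⁻, a⁺) ∩ [b⁻, b⁺]`, the value `H x` is squeezed between `H a` and `H b`, which forces
`H b = H a`; so `F_A = H a` on `(a⁻, a⁺)`. Given `a ∈ A₁`, pick `x ∈ (a⁻, a⁺)` with `x ≠ a`: then
`F_{A₂} x = F_{A₁} x = H a ≠ H x`, so `x ∈ [b⁻, b⁺]` for some `b ∈ A₂` with `H b = H a`, and the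
same squeeze makes `H x = H a` unless `b = a`.
-/

section LimitedFlux

variable {H : ℝ → ℝ} {a b p q x : ℝ}

lemma le_pminus (hqp : q < p) (h : H p ≤ H q) : q ≤ pminus H p :=
  le_csSup ⟨p, fun _ hr => hr.1.le⟩ ⟨hqp, h⟩

lemma pminus_le (hH : Tendsto H atBot atTop) (p : ℝ) : pminus H p ≤ p := by
  obtain ⟨q, hq, hqp⟩ : ∃ q, H p ≤ H q ∧ q < p :=
    ((hH.eventually_ge_atTop (H p)).and (eventually_lt_atBot p)).exists
  exact csSup_le ⟨q, hqp, hq⟩ fun _ hr => hr.1.le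

lemma pplus_le (hpq : p < q) (h : H q ≤ H p) : pplus H p ≤ q :=
  sInf_le ⟨q, ⟨hpq, h⟩, rfl⟩

lemma le_pplus (p : ℝ) : (p : EReal) ≤ pplus H p :=
  le_sInf <| by rintro _ ⟨q, ⟨hpq, -⟩, rfl⟩; exact_mod_cast hpq.le

lemma apply_lt_of_pminus_lt (h₁ : pminus H p < q) (h₂ : q < p) : H q < H p :=
  lt_of_not_ge fun h => (le_pminus h₂ h).not_gt h₁

lemma lt_apply_of_lt_pplus (h₁ : p < q) (h₂ : (q : EReal) < pplus H p) : H p < H q :=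
  lt_of_not_ge fun h => (pplus_le h₁ h).not_gt h₂

lemma apply_le_of_pminus_le (hH : Continuous H) (h₁ : pminus H p ≤ q) (h₂ : q ≤ p) :
    H q ≤ H p := by
  rcases h₂.eq_or_lt with rfl | hqp
  · exact le_rfl
  rcases h₁.eq_or_lt with rfl | h₁
  · refine le_of_tendsto (hH.continuousWithinAt (s := Ioi (pminus H p)) (x := pminus H p)) ?_
    filter_upwards [Ioo_mem_nhdsGT hqp] with r hr using (apply_lt_of_pminus_lt hr.1 hr.2).le
  · exact (apply_lt_of_pminus_lt h₁ hqp).le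

lemma le_apply_of_le_pplus (hH : Continuous H) (h₁ : p ≤ q) (h₂ : (q : EReal) ≤ pplus H p) :
    H p ≤ H q := by
  rcases h₁.eq_or_lt with rfl | hpq
  · exact le_rfl
  rcases h₂.eq_or_lt with h₂ | h₂
  · refine ge_of_tendsto (hH.continuousWithinAt (s := Iio q) (x := q)) ?_
    filter_upwards [Ioo_mem_nhdsLT hpq] with r hr
    exact (lt_apply_of_lt_pplus hr.1 ((EReal.coe_lt_coe_iff.2 hr.2).trans_eq h₂)).le
  · exact (lt_apply_of_lt_pplus hpq h₂).le

lemma apply_ne_of_mem_ooMM (hx : x ∈ ooMM H a) (hxa : x ≠ a) : H x ≠ H a := by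
  rcases hxa.lt_or_gt with hxa | hax
  · exact (apply_lt_of_pminus_lt hx.1 hxa).ne
  · exact (lt_apply_of_lt_pplus hax hx.2).ne'

lemma exists_ne_mem_ooMM (hH : Tendsto H atBot atTop) (ha : (pminus H a : EReal) ≠ pplus H a) :
    ∃ x ∈ ooMM H a, x ≠ a := by
  rcases (pminus_le hH a).eq_or_lt with hmin | hmin
  · obtain ⟨x, hax, hx⟩ := EReal.exists_between_coe_real <|
      (le_pplus a).lt_of_ne (by simpa only [hmin] using ha)
    have hax : a < x := by exact_mod_cast hax
    exact ⟨x, ⟨hmin.trans_lt hax, hx⟩, hax.ne'⟩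
  · obtain ⟨x, hx, hxa⟩ := exists_between hmin
    exact ⟨x, ⟨hx, (EReal.coe_lt_coe_iff.2 hxa).trans_le (le_pplus a)⟩, hxa.ne⟩

lemma apply_mem_Icc_of_lt (hH : Continuous H) (hba : b < a) (h : H a ≤ H b)
    (hxa : x ∈ ooMM H a) (hxb : x ∈ ccMM H b) : H x ∈ Icc (H b) (H a) := by
  have hbx : b ≤ x := (le_pminus hba h).trans hxa.1.le
  have hxa' : x ≤ a := by exact_mod_cast hxb.2.trans (pplus_le hba h)
  exact ⟨le_apply_of_le_pplus hH hbx hxb.2, apply_le_of_pminus_le hH hxa.1.le hxa'⟩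

lemma apply_mem_Icc_of_gt (hH : Continuous H) (hab : a < b) (h : H b ≤ H a)
    (hxa : x ∈ ooMM H a) (hxb : x ∈ ccMM H b) : H x ∈ Icc (H a) (H b) := by
  have hax : a ≤ x := (le_pminus hab h).trans hxb.1
  have hxb' : x ≤ b := by exact_mod_cast hxa.2.le.trans (pplus_le hab h)
  exact ⟨le_apply_of_le_pplus hH hax hxa.2.le, apply_le_of_pminus_le hH hxb.1 hxb'⟩

lemma apply_eq_of_mem_ooMM_of_mem_ccMM (hH : Continuous H) {A : Set ℝ} (hA : AntitoneOn H A)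
    (ha : a ∈ A) (hb : b ∈ A) (hxa : x ∈ ooMM H a) (hxb : x ∈ ccMM H b) : H b = H a := by
  rcases lt_trichotomy b a with hba | rfl | hab
  · have h := hA hb ha hba.le
    exact le_antisymm ((apply_mem_Icc_of_lt hH hba h hxa hxb).elim le_trans) h
  · rfl
  · have h := hA ha hb hab.le
    exact le_antisymm h ((apply_mem_Icc_of_gt hH hab h hxa hxb).elim le_trans)

lemma eq_of_mem_ooMM_of_mem_ccMM (hH : Continuous H) (hxa : x ∈ ooMM H a) (hxa' : x ≠ a)
    (hxb : x ∈ ccMM H b) (hH_eq : H b = H a) : b = a := by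
  by_contra hne
  refine apply_ne_of_mem_ooMM hxa hxa' ?_
  rcases lt_or_gt_of_ne hne with hba | hab
  · obtain ⟨h₁, h₂⟩ := apply_mem_Icc_of_lt hH hba hH_eq.ge hxa hxb
    exact le_antisymm h₂ (hH_eq ▸ h₁)
  · obtain ⟨h₁, h₂⟩ := apply_mem_Icc_of_gt hH hab hH_eq.le hxa hxb
    exact le_antisymm (hH_eq ▸ h₂) h₁

lemma IsSetLimiter.antitoneOn {A : Set ℝ} (hA : IsSetLimiter H A) : AntitoneOn H A :=
  antitoneOn_iff_forall_lt.2 hA.2.1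

lemma limFlux_eq_of_mem_ooMM (hH : Continuous H) {A : Set ℝ} (hA : AntitoneOn H A)
    (ha : a ∈ A) (hx : x ∈ ooMM H a) : limFlux H A x = H a := by
  have hex : ∃ b, b ∈ A ∧ x ∈ ccMM H b := ⟨a, ha, hx.1.le, hx.2.le⟩
  rw [limFlux, dif_pos hex]
  exact apply_eq_of_mem_ooMM_of_mem_ccMM hH hA ha hex.choose_spec.1 hx hex.choose_spec.2

lemma exists_mem_ccMM_of_limFlux_ne {A : Set ℝ} (hx : limFlux H A x ≠ H x) :
    ∃ b ∈ A, x ∈ ccMM H b ∧ limFlux H A x = H b := by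
  by_cases hex : ∃ b, b ∈ A ∧ x ∈ ccMM H b
  · exact ⟨hex.choose, hex.choose_spec.1, hex.choose_spec.2, by rw [limFlux, dif_pos hex]⟩
  · exact absurd (by rw [limFlux, dif_neg hex]) hx

lemma IsSetLimiter.subset_of_limFlux_eq (hH : Continuous H) (hcoer : Tendsto H atBot atTop)
    {A₁ A₂ : Set ℝ} (hA₁ : IsSetLimiter H A₁) (heq : limFlux H A₁ = limFlux H A₂) :
    A₁ ⊆ A₂ := by
  intro a ha
  obtain ⟨x, hxa, hxa'⟩ := exists_ne_mem_ooMM hcoer (hA₁.1 a ha)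
  have hF : limFlux H A₂ x = H a := heq ▸ limFlux_eq_of_mem_ooMM hH hA₁.antitoneOn ha hxa
  obtain ⟨b, hb, hxb, hFb⟩ :=
    exists_mem_ccMM_of_limFlux_ne (hF.trans_ne (apply_ne_of_mem_ooMM hxa hxa').symm)
  exact eq_of_mem_ooMM_of_mem_ccMM hH hxa hxa' hxb (hFb.symm.trans hF) ▸ hb

end LimitedFlux

theorem stmt8 (H : ℝ → ℝ) (hH : Continuous H) (hcoer : Coercive H)
    (A₁ A₂ : Set ℝ) (hA₁ : IsSetLimiter H A₁) (hA₂ : IsSetLimiter H A₂)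
    (heq : limFlux H A₁ = limFlux H A₂) :
    A₁ = A₂ :=
  (hA₁.subset_of_limFlux_eq hH hcoer.2 heq).antisymm (hA₂.subset_of_limFlux_eq hH hcoer.2 heq.symm)
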